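/- arXiv:2112.11489 — 4 statements merged into one kernel-verified Lean document; each statement's English description precedes it below -/
import Mathlib

section
/- The non-orthogonal projection Q: L²(∂Ω) → L²(∂Ω) defined by Q(f) = ∑_{m=1}^M (1/H^{N-1}(e_m)) (∫_{ẽ_m} f) χ_{e_m} satisfies ‖Q‖_{L(L²(∂Ω))} ≤ θ^{1/2}, where θ = max_m H^{N-1}(ẽ_m)/H^{N-1}(e_m). Moreover Q maps mean-zero functions to mean-zero functions in PC, and Q is the identity on PC_*. -/
/-!
`Q f` is constant on each `e m`, so `∫ (Q f)² = ∑ m, (∫_{ẽ_m} f)² / |e_m|`. Cauchy–Schwarz on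
`ẽ_m` bounds `(∫_{ẽ_m} f)²` by `|ẽ_m| ∫_{ẽ_m} f² ≤ θ |e_m| ∫_{ẽ_m} f²`, and since the `ẽ_m`
partition the space up to a null set, summing gives `‖Q f‖² ≤ θ ‖f‖²`. The same partition gives
`∫ Q f = ∑ m, ∫_{ẽ_m} f = ∫ f`. Finally `e m ⊆ ẽ_m` is disjoint from every other `ẽ_k`, so
`∫_{ẽ_m} Φ(I) = I m`, which says exactly that `Q Φ(I) = Φ(I)`.
-/

open MeasureTheory

/-- The function `Φ(I) = ∑_m (I_m / H^{N-1}(e_m)) χ_{e_m}`. -/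
noncomputable def elecFun {X : Type*} [MeasurableSpace X] (ν : Measure X) {M : ℕ}
    (e : Fin M → Set X) (I : Fin M → ℝ) : X → ℝ :=
  fun x => ∑ m, Set.indicator (e m) (fun _ => I m / (ν (e m)).toReal) x

/-- The non-orthogonal projection
`Q(f) = ∑_m (1/H^{N-1}(e_m)) (∫_{ẽ_m} f) χ_{e_m}`. -/
noncomputable def Qfun {X : Type*} [MeasurableSpace X] (ν : Measure X) {M : ℕ}
    (e et : Fin M → Set X) (f : X → ℝ) : X → ℝ :=
  fun x => ∑ m, Set.indicator (e m)
    (fun _ => (∫ y in et m, f y ∂ν) / (ν (e m)).toReal) x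

section PiecewiseConstant

variable {X ι : Type*} [Fintype ι] {s : ι → Set X}

lemma sq_sum_indicator_const (hs : Pairwise (Function.onFun Disjoint s)) (c : ι → ℝ) (x : X) :
    (∑ i, (s i).indicator (fun _ => c i) x) ^ 2 = ∑ i, (s i).indicator (fun _ => c i ^ 2) x := by
  by_cases hx : ∃ i, x ∈ s i
  · obtain ⟨i, hi⟩ := hx
    have hnot : ∀ j ≠ i, x ∉ s j := fun j hj hxj => (hs hj).ne_of_mem hxj hi rfl
    rw [Finset.sum_eq_single_of_mem i (Finset.mem_univ i)
        fun j _ hj => Set.indicator_of_notMem (hnot j hj) _,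
      Finset.sum_eq_single_of_mem i (Finset.mem_univ i)
        fun j _ hj => Set.indicator_of_notMem (hnot j hj) _]
    simp only [Set.indicator_of_mem hi]
  · push Not at hx
    simp [Set.indicator_of_notMem (hx _)]

variable [MeasurableSpace X] {μ : Measure X} [IsFiniteMeasure μ]

lemma integral_sum_indicator_const (hs : ∀ i, MeasurableSet (s i)) (c : ι → ℝ) :
    ∫ x, ∑ i, (s i).indicator (fun _ => c i) x ∂μ = ∑ i, μ.real (s i) * c i := by
  rw [integral_finsetSum _ fun i _ => (integrable_const (c i)).indicator (hs i)]
  simp only [integral_indicator_const _ (hs _), smul_eq_mul]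

lemma setIntegral_sum_indicator_const (hs : ∀ i, MeasurableSet (s i)) (t : Set X)
    (c : ι → ℝ) :
    ∫ x in t, ∑ i, (s i).indicator (fun _ => c i) x ∂μ = ∑ i, μ.real (s i ∩ t) * c i := by
  simp only [integral_sum_indicator_const hs, measureReal_restrict_apply (hs _)]

end PiecewiseConstant

section Integrals

variable {X : Type*} [MeasurableSpace X] {μ : Measure X}

lemma sum_setIntegral_eq_integral_of_ae_cover {ι : Type*} [Fintype ι] {t : ι → Set X}
    (ht : ∀ i, MeasurableSet (t i)) (hdisj : Pairwise (Function.onFun Disjoint t))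
    (hcover : μ (Set.univ \ ⋃ i, t i) = 0) {f : X → ℝ} (hf : Integrable f μ) :
    ∑ i, ∫ x in t i, f x ∂μ = ∫ x, f x ∂μ := by
  have hae : ∀ᵐ x ∂μ, x ∈ ⋃ i, t i := by
    rw [ae_iff]; simpa [Set.sdiff_eq, Set.compl_def] using hcover
  rw [← integral_iUnion_fintype ht hdisj fun i => hf.integrableOn, integral_eq_setIntegral hae]

lemma toReal_eLpNorm_two {g : X → ℝ} (hg : AEStronglyMeasurable g μ) :
    (eLpNorm g 2 μ).toReal = √(∫ x, g x ^ 2 ∂μ) := by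
  rw [toReal_eLpNorm hg, lpNorm_eq_integral_norm_rpow_toReal two_ne_zero ENNReal.ofNat_ne_top hg]
  norm_num [Real.sqrt_eq_rpow]

lemma sq_integral_le_measureReal_mul_integral_sq [IsFiniteMeasure μ] {f : X → ℝ}
    (hf : MemLp f 2 μ) : (∫ x, f x ∂μ) ^ 2 ≤ μ.real Set.univ * ∫ x, f x ^ 2 ∂μ := by
  have holder := integral_mul_norm_le_Lp_mul_Lq (f := f) (g := fun _ => (1 : ℝ))
    Real.HolderConjugate.two_two (by simpa using hf) (by simpa using memLp_const (1 : ℝ))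
  simp only [norm_one, mul_one, one_pow, integral_const, smul_eq_mul, Real.norm_eq_abs,
    Real.rpow_two, sq_abs, ← Real.sqrt_eq_rpow] at holder
  calc (∫ x, f x ∂μ) ^ 2 = |∫ x, f x ∂μ| ^ 2 := (sq_abs _).symm
    _ ≤ (√(∫ x, f x ^ 2 ∂μ) * √(μ.real Set.univ)) ^ 2 :=
      pow_le_pow_left₀ (abs_nonneg _) (abs_integral_le_integral_abs.trans holder) 2
    _ = μ.real Set.univ * ∫ x, f x ^ 2 ∂μ := by
      rw [mul_pow, Real.sq_sqrt (integral_nonneg fun x => sq_nonneg _),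
        Real.sq_sqrt measureReal_nonneg, mul_comm]

lemma sq_setIntegral_le_measureReal_mul_setIntegral_sq [IsFiniteMeasure μ] {f : X → ℝ}
    (hf : MemLp f 2 μ) (s : Set X) :
    (∫ x in s, f x ∂μ) ^ 2 ≤ μ.real s * ∫ x in s, f x ^ 2 ∂μ := by
  simpa using sq_integral_le_measureReal_mul_integral_sq (hf.restrict s)

lemma measureReal_pos_of_pos [IsFiniteMeasure μ] {s : Set X} (hs : 0 < μ s) : 0 < μ.real s :=
  ENNReal.toReal_pos hs.ne' (measure_ne_top μ s)

end Integrals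

section Projection

variable {X : Type*} [MeasurableSpace X] {ν : Measure X} {M : ℕ} {e et : Fin M → Set X}

lemma measurable_Qfun (hmeas : ∀ m, MeasurableSet (e m)) (f : X → ℝ) :
    Measurable (Qfun ν e et f) :=
  Finset.measurable_fun_sum _ fun m _ => measurable_const.indicator (hmeas m)

variable [IsFiniteMeasure ν]

lemma integral_Qfun (hmeas : ∀ m, MeasurableSet (e m)) (hpos : ∀ m, 0 < ν (e m))
    (f : X → ℝ) : ∫ x, Qfun ν e et f x ∂ν = ∑ m, ∫ x in et m, f x ∂ν := by
  unfold Qfun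
  rw [integral_sum_indicator_const hmeas]
  exact Finset.sum_congr rfl fun m _ => mul_div_cancel₀ _ (measureReal_pos_of_pos (hpos m)).ne'

lemma integral_sq_Qfun_le (hmeas : ∀ m, MeasurableSet (e m))
    (hmeas' : ∀ m, MeasurableSet (et m)) (hdisj : Pairwise (Function.onFun Disjoint e))
    (hdisj' : Pairwise (Function.onFun Disjoint et)) (hcover : ν (Set.univ \ ⋃ m, et m) = 0)
    (hpos : ∀ m, 0 < ν (e m)) {θ : ℝ} (hθ : ∀ m, (ν (et m)).toReal ≤ θ * (ν (e m)).toReal)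
    {f : X → ℝ} (hf : MemLp f 2 ν) :
    ∫ x, Qfun ν e et f x ^ 2 ∂ν ≤ θ * ∫ x, f x ^ 2 ∂ν := by
  have hterm (m : Fin M) : ν.real (e m) * ((∫ x in et m, f x ∂ν) / ν.real (e m)) ^ 2
      ≤ θ * ∫ x in et m, f x ^ 2 ∂ν := by
    have he : 0 < ν.real (e m) := measureReal_pos_of_pos (hpos m)
    have hsq : 0 ≤ ∫ x in et m, f x ^ 2 ∂ν := integral_nonneg fun x => sq_nonneg _
    rw [show ν.real (e m) * ((∫ x in et m, f x ∂ν) / ν.real (e m)) ^ 2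
        = (∫ x in et m, f x ∂ν) ^ 2 / ν.real (e m) by field_simp, div_le_iff₀ he]
    calc (∫ x in et m, f x ∂ν) ^ 2 ≤ ν.real (et m) * ∫ x in et m, f x ^ 2 ∂ν :=
          sq_setIntegral_le_measureReal_mul_setIntegral_sq hf (et m)
      _ ≤ θ * ν.real (e m) * ∫ x in et m, f x ^ 2 ∂ν := mul_le_mul_of_nonneg_right (hθ m) hsq
      _ = _ := by ring
  simp only [Qfun, sq_sum_indicator_const hdisj]
  rw [integral_sum_indicator_const hmeas,
    ← sum_setIntegral_eq_integral_of_ae_cover hmeas' hdisj' hcover hf.integrable_sq,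
    Finset.mul_sum]
  exact Finset.sum_le_sum fun m _ => hterm m

lemma setIntegral_elecFun (hmeas : ∀ m, MeasurableSet (e m)) (hsub : ∀ m, e m ⊆ et m)
    (hdisj' : Pairwise (Function.onFun Disjoint et)) (hpos : ∀ m, 0 < ν (e m))
    (I : Fin M → ℝ) (m : Fin M) : ∫ x in et m, elecFun ν e I x ∂ν = I m := by
  unfold elecFun
  rw [setIntegral_sum_indicator_const hmeas,
    Finset.sum_eq_single_of_mem m (Finset.mem_univ m), Set.inter_eq_left.mpr (hsub m)]
  · exact mul_div_cancel₀ _ (measureReal_pos_of_pos (hpos m)).ne'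
  · intro k _ hk
    rw [((hdisj' hk).mono_left (hsub k)).inter_eq, measureReal_empty, zero_mul]

lemma Qfun_elecFun (hmeas : ∀ m, MeasurableSet (e m)) (hsub : ∀ m, e m ⊆ et m)
    (hdisj' : Pairwise (Function.onFun Disjoint et)) (hpos : ∀ m, 0 < ν (e m))
    (I : Fin M → ℝ) : Qfun ν e et (elecFun ν e I) = elecFun ν e I := by
  funext x
  simp only [Qfun, setIntegral_elecFun hmeas hsub hdisj' hpos]
  rfl

end Projection

theorem stmt_4_general {X : Type*} [MeasurableSpace X] (ν : Measure X) [IsFiniteMeasure ν]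
    (M : ℕ)
    (e et : Fin M → Set X)
    (hmeas : ∀ m, MeasurableSet (e m)) (hmeas' : ∀ m, MeasurableSet (et m))
    (hsub : ∀ m, e m ⊆ et m)
    (hdisj : Pairwise (Function.onFun Disjoint e))
    (hdisj' : Pairwise (Function.onFun Disjoint et))
    (hcover : ν (Set.univ \ ⋃ m, et m) = 0)
    (hpos : ∀ m, 0 < ν (e m))
    (θ : ℝ) (hθ : ∀ m, (ν (et m)).toReal ≤ θ * (ν (e m)).toReal) :
    (∀ f : X → ℝ, MemLp f 2 ν →
        (eLpNorm (Qfun ν e et f) 2 ν).toReal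
          ≤ Real.sqrt θ * (eLpNorm f 2 ν).toReal) ∧
      (∀ f : X → ℝ, MemLp f 2 ν → ∫ x, f x ∂ν = 0 →
        ∫ x, Qfun ν e et f x ∂ν = 0) ∧
      (∀ I : Fin M → ℝ, ∑ m, I m = 0 →
        Qfun ν e et (elecFun ν e I) = elecFun ν e I) := by
  refine ⟨fun f hf => ?_, fun f hf hf0 => ?_, fun I _ => Qfun_elecFun hmeas hsub hdisj' hpos I⟩
  · rw [toReal_eLpNorm_two (measurable_Qfun hmeas f).aestronglyMeasurable,
      toReal_eLpNorm_two hf.aestronglyMeasurable,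
      ← Real.sqrt_mul' θ (integral_nonneg fun x => sq_nonneg _)]
    exact Real.sqrt_le_sqrt
      (integral_sq_Qfun_le hmeas hmeas' hdisj hdisj' hcover hpos hθ hf)
  · rw [integral_Qfun hmeas hpos,
      sum_setIntegral_eq_integral_of_ae_cover hmeas' hdisj' hcover (hf.integrable one_le_two), hf0]

/-- The non-orthogonal projection `Q : L²(∂Ω) → L²(∂Ω)` satisfies
`‖Q‖ ≤ θ^{1/2}` where `θ = max_m H^{N-1}(ẽ_m)/H^{N-1}(e_m)`; moreover `Q` maps
mean-zero functions to mean-zero functions (valued in `PC`), and `Q` is the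
identity on `PC_*`. -/
theorem stmt_4 {X : Type*} [MeasurableSpace X] (ν : Measure X) [IsFiniteMeasure ν]
    (M : ℕ) (hM : 1 ≤ M)
    (e et : Fin M → Set X)
    (hmeas : ∀ m, MeasurableSet (e m)) (hmeas' : ∀ m, MeasurableSet (et m))
    (hsub : ∀ m, e m ⊆ et m)
    (hdisj : Pairwise (Function.onFun Disjoint e))
    (hdisj' : Pairwise (Function.onFun Disjoint et))
    (hcover : ν (Set.univ \ ⋃ m, et m) = 0)
    (hpos : ∀ m, 0 < ν (e m))
    (θ : ℝ) (hθ : ∀ m, (ν (et m)).toReal ≤ θ * (ν (e m)).toReal) :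
    (∀ f : X → ℝ, MemLp f 2 ν →
        (eLpNorm (Qfun ν e et f) 2 ν).toReal
          ≤ Real.sqrt θ * (eLpNorm f 2 ν).toReal) ∧
      (∀ f : X → ℝ, MemLp f 2 ν → ∫ x, f x ∂ν = 0 →
        ∫ x, Qfun ν e et f x ∂ν = 0) ∧
      (∀ I : Fin M → ℝ, ∑ m, I m = 0 →
        Qfun ν e et (elecFun ν e I) = elecFun ν e I) :=
  stmt_4_general ν M e et hmeas hmeas' hsub hdisj hdisj' hcover hpos θ hθ
end

section
/- The extension operator E: PC → L²(∂Ω), E(Ṽ) = P_*[∑_m (V_m/H^{N-1}(e_m)) χ_{ẽ_m}] where V = Φ^{-1}(Ṽ) and P_* subtracts the mean over ∂Ω, has operator norm at most θ^{1/2}. -/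
/-!
On each `ẽ_m` the function `∑_m (V_m / |e_m|) χ_{ẽ_m}` is the constant `V_m / |e_m|`, so its
squared `L²` norm is `∑_m (V_m / |e_m|)² |ẽ_m| ≤ θ ∑_m (V_m / |e_m|)² |e_m| = θ ‖Ṽ‖²`.
Subtracting the mean is an orthogonal projection and does not increase the `L²` norm.
-/

open MeasureTheory

/-- The extension `E(Ṽ) = P_*[∑_m (V_m/H^{N-1}(e_m)) χ_{ẽ_m}]` where `V = Φ⁻¹(Ṽ)`
and `P_*` is the orthogonal projection subtracting the mean over `∂Ω`. -/
noncomputable def extFun {X : Type*} [MeasurableSpace X] (ν : Measure X) {M : ℕ}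
    (e et : Fin M → Set X) (V : Fin M → ℝ) : X → ℝ :=
  fun x => (∑ m, Set.indicator (et m) (fun _ => V m / (ν (e m)).toReal) x) -
    (∫ y, (∑ m, Set.indicator (et m) (fun _ => V m / (ν (e m)).toReal) y) ∂ν) /
      (ν Set.univ).toReal

lemma sum_indicator_const_of_mem {X ι R : Type*} [Fintype ι] [AddCommMonoid R] {s : ι → Set X}
    (hs : Pairwise (Function.onFun Disjoint s)) {x : X} {i : ι} (hi : x ∈ s i) (b : ι → R) :
    ∑ j, (s j).indicator (fun _ => b j) x = b i := by
  rw [Finset.sum_eq_single_of_mem i (Finset.mem_univ i)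
    fun j _ hji => Set.indicator_of_notMem (Set.disjoint_right.mp (hs hji) hi) _]
  exact Set.indicator_of_mem hi _

lemma apply_sum_indicator_of_pairwiseDisjoint {X ι R S : Type*} [Fintype ι]
    [AddCommMonoid R] [AddCommMonoid S] {s : ι → Set X}
    (hs : Pairwise (Function.onFun Disjoint s)) (φ : R → S) (hφ : φ 0 = 0) (a : ι → R) (x : X) :
    φ (∑ i, (s i).indicator (fun _ => a i) x) = ∑ i, (s i).indicator (fun _ => φ (a i)) x := by
  by_cases hx : ∃ i, x ∈ s i
  · obtain ⟨i, hi⟩ := hx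
    rw [sum_indicator_const_of_mem hs hi, sum_indicator_const_of_mem hs hi]
  · push Not at hx
    simp [Set.indicator_of_notMem (hx _), hφ]

lemma memLp_sum_indicator_const {X ι : Type*} [MeasurableSpace X] [Fintype ι] {ν : Measure X}
    [IsFiniteMeasure ν] (p : ENNReal) {s : ι → Set X} (hs : ∀ i, MeasurableSet (s i))
    (a : ι → ℝ) : MemLp (fun x => ∑ i, (s i).indicator (fun _ => a i) x) p ν :=
  memLp_finsetSum _ fun i _ => memLp_indicator_const p (hs i) (a i) (.inr (measure_ne_top ν _))

lemma toReal_eLpNorm_two_eq_sqrt_integral_sq {X : Type*} [MeasurableSpace X] {ν : Measure X}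
    {f : X → ℝ} (hf : MemLp f 2 ν) :
    (eLpNorm f 2 ν).toReal = √(∫ x, f x ^ 2 ∂ν) := by
  rw [hf.eLpNorm_eq_integral_rpow_norm two_ne_zero ENNReal.ofNat_ne_top,
    ENNReal.toReal_ofReal (by positivity), Real.sqrt_eq_rpow]
  norm_num

lemma toReal_eLpNorm_two_sum_indicator {X ι : Type*} [MeasurableSpace X] [Fintype ι]
    {ν : Measure X} [IsFiniteMeasure ν] {s : ι → Set X} (hs : ∀ i, MeasurableSet (s i))
    (hdisj : Pairwise (Function.onFun Disjoint s)) (a : ι → ℝ) :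
    (eLpNorm (fun x => ∑ i, (s i).indicator (fun _ => a i) x) 2 ν).toReal
      = √(∑ i, a i ^ 2 * ν.real (s i)) := by
  rw [toReal_eLpNorm_two_eq_sqrt_integral_sq (memLp_sum_indicator_const 2 hs a)]
  simp_rw [apply_sum_indicator_of_pairwiseDisjoint hdisj (fun t : ℝ => t ^ 2) (zero_pow two_ne_zero)]
  rw [integral_finsetSum _ fun i _ => (integrable_const _).indicator (hs i)]
  simp_rw [integral_indicator_const _ (hs _), smul_eq_mul, mul_comm]

lemma integral_sq_sub_average_le {X : Type*} [MeasurableSpace X] {ν : Measure X}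
    [IsFiniteMeasure ν] {f : X → ℝ} (hf : MemLp f 2 ν) :
    ∫ x, (f x - (∫ y, f y ∂ν) / ν.real Set.univ) ^ 2 ∂ν ≤ ∫ x, f x ^ 2 ∂ν := by
  set B := ∫ y, f y ∂ν
  set T := ν.real Set.univ
  have hf1 : Integrable f ν := hf.integrable one_le_two
  have expand :
      ∫ x, (f x - B / T) ^ 2 ∂ν = ∫ x, f x ^ 2 ∂ν - 2 * B * (B / T) + (B / T) ^ 2 * T := by
    simp_rw [sub_sq]
    rw [integral_add (hf.integrable_sq.sub' ((hf1.const_mul 2).mul_const _)) (integrable_const _),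
      integral_sub hf.integrable_sq ((hf1.const_mul 2).mul_const _), integral_const, smul_eq_mul,
      integral_mul_const, integral_const_mul, mul_comm T]
  have cross_term : -2 * B * (B / T) + (B / T) ^ 2 * T = -(B ^ 2 / T) := by
    rcases eq_or_ne T 0 with hT | hT
    · simp [hT]
    · field_simp
      ring
  have : 0 ≤ B ^ 2 / T := div_nonneg (sq_nonneg B) measureReal_nonneg
  linarith

lemma eLpNorm_sub_average_le {X : Type*} [MeasurableSpace X] {ν : Measure X}
    [IsFiniteMeasure ν] {f : X → ℝ} (hf : MemLp f 2 ν) :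
    eLpNorm (fun x => f x - (∫ y, f y ∂ν) / ν.real Set.univ) 2 ν ≤ eLpNorm f 2 ν := by
  have hsub : MemLp (fun x => f x - (∫ y, f y ∂ν) / ν.real Set.univ) 2 ν :=
    hf.sub (memLp_const _)
  rw [← ENNReal.toReal_le_toReal hsub.eLpNorm_ne_top hf.eLpNorm_ne_top,
    toReal_eLpNorm_two_eq_sqrt_integral_sq hsub, toReal_eLpNorm_two_eq_sqrt_integral_sq hf]
  exact Real.sqrt_le_sqrt (integral_sq_sub_average_le hf)

theorem stmt_5_general {X : Type*} [MeasurableSpace X] (ν : Measure X) [IsFiniteMeasure ν]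
    (M : ℕ)
    (e et : Fin M → Set X)
    (hmeas : ∀ m, MeasurableSet (e m)) (hmeas' : ∀ m, MeasurableSet (et m))
    (hdisj : Pairwise (Function.onFun Disjoint e))
    (hdisj' : Pairwise (Function.onFun Disjoint et))
    (θ : ℝ) (hθ : ∀ m, (ν (et m)).toReal ≤ θ * (ν (e m)).toReal) :
    ∀ V : Fin M → ℝ,
      (eLpNorm (extFun ν e et V) 2 ν).toReal
        ≤ Real.sqrt θ * (eLpNorm (elecFun ν e V) 2 ν).toReal := by
  intro V
  set a : Fin M → ℝ := fun m => V m / (ν (e m)).toReal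
  have hf := memLp_sum_indicator_const (ν := ν) 2 hmeas' a
  calc (eLpNorm (extFun ν e et V) 2 ν).toReal
      ≤ (eLpNorm (fun x => ∑ m, (et m).indicator (fun _ => a m) x) 2 ν).toReal :=
        ENNReal.toReal_mono hf.eLpNorm_ne_top (eLpNorm_sub_average_le hf)
    _ = √(∑ m, a m ^ 2 * ν.real (et m)) := toReal_eLpNorm_two_sum_indicator hmeas' hdisj' a
    _ ≤ √(θ * ∑ m, a m ^ 2 * ν.real (e m)) := by
        refine Real.sqrt_le_sqrt ?_
        rw [Finset.mul_sum]
        refine Finset.sum_le_sum fun m _ => ?_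
        calc a m ^ 2 * ν.real (et m) ≤ a m ^ 2 * (θ * ν.real (e m)) := by gcongr; exact hθ m
          _ = θ * (a m ^ 2 * ν.real (e m)) := by ring
    _ = √θ * (eLpNorm (elecFun ν e V) 2 ν).toReal := by
        rw [Real.sqrt_mul' θ (by positivity), ← toReal_eLpNorm_two_sum_indicator hmeas hdisj a]
        rfl

/-- The extension operator `E : PC → L²(∂Ω)` has operator norm at most `θ^{1/2}`:
for every `Ṽ = Φ(V) ∈ PC`, `‖E(Ṽ)‖_{L²(∂Ω)} ≤ θ^{1/2} ‖Ṽ‖_{L²(∂Ω)}`. -/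
theorem stmt_5 {X : Type*} [MeasurableSpace X] (ν : Measure X) [IsFiniteMeasure ν]
    (M : ℕ) (hM : 1 ≤ M)
    (e et : Fin M → Set X)
    (hmeas : ∀ m, MeasurableSet (e m)) (hmeas' : ∀ m, MeasurableSet (et m))
    (hsub : ∀ m, e m ⊆ et m)
    (hdisj : Pairwise (Function.onFun Disjoint e))
    (hdisj' : Pairwise (Function.onFun Disjoint et))
    (hcover : ν (Set.univ \ ⋃ m, et m) = 0)
    (hpos : ∀ m, 0 < ν (e m)) (htot : 0 < ν Set.univ)
    (θ : ℝ) (hθ : ∀ m, (ν (et m)).toReal ≤ θ * (ν (e m)).toReal) :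
    ∀ V : Fin M → ℝ,
      (eLpNorm (extFun ν e et V) 2 ν).toReal
        ≤ Real.sqrt θ * (eLpNorm (elecFun ν e V) 2 ν).toReal :=
  stmt_5_general ν M e et hmeas hmeas' hdisj hdisj' θ hθ
end

section
/- Céa's Lemma: Let H be a Hilbert space, X a closed subspace, b a symmetric continuous coercive bilinear form with c₁‖u‖² ≤ b(u,u) and b(u,w) ≤ c₂‖u‖‖w‖. If u ∈ H solves b(u,w)=F[w] for all w ∈ H and u_X ∈ X solves b(u_X,w)=F[w] for all w ∈ X, then ‖u − u_X‖ ≤ √(c₂/c₁) · inf{‖u − v‖ : v ∈ X}. -/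
open scoped RealInnerProductSpace

/-!
Galerkin orthogonality: `e = u - uX` is `b`-orthogonal to `X`. For `v ∈ X`, `d = uX - v` lies in
`X`, so `b(u - v, u - v) = b(e, e) + b(d, d) ≥ b(e, e)`: the Galerkin solution minimises the
energy error. Coercivity and boundedness then give `c₁‖e‖² ≤ b(e, e) ≤ b(u - v, u - v) ≤ c₂‖u - v‖²`.
-/

section Galerkin

variable {R M : Type*} [CommRing R] [AddCommGroup M] [Module R M]

theorem galerkin_orthogonality (b : M →ₗ[R] M →ₗ[R] R) (F : M →ₗ[R] R) (X : Submodule R M)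
    {u uX : M} (hu : ∀ w, b u w = F w) (huX : ∀ w ∈ X, b uX w = F w) :
    ∀ w ∈ X, b (u - uX) w = 0 := by
  intro w hw
  simp [hu w, huX w hw]

theorem le_apply_add_add_of_orthogonal [PartialOrder R] [IsOrderedRing R]
    (b : M →ₗ[R] M →ₗ[R] R) (hsym : ∀ x y, b x y = b y x) {e d : M}
    (horth : b e d = 0) (hd : 0 ≤ b d d) :
    b e e ≤ b (e + d) (e + d) := by
  have horth' : b d e = 0 := by rw [hsym, horth]
  simp only [map_add, LinearMap.add_apply, horth, horth', add_zero, zero_add]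
  exact le_add_of_nonneg_right hd

end Galerkin

theorem le_sqrt_div_mul_of_mul_sq_le {a b c₁ c₂ : ℝ} (hc₁ : 0 < c₁) (hb : 0 ≤ b)
    (h : c₁ * a ^ 2 ≤ c₂ * b ^ 2) : a ≤ √(c₂ / c₁) * b := by
  have hsq : a ^ 2 ≤ c₂ / c₁ * b ^ 2 := by
    rw [div_mul_eq_mul_div, le_div_iff₀ hc₁]
    linarith
  calc a ≤ √(c₂ / c₁ * b ^ 2) := Real.le_sqrt_of_sq_le hsq
    _ = √(c₂ / c₁) * b := by rw [Real.sqrt_mul' _ (sq_nonneg b), Real.sqrt_sq hb]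

theorem stmt_12_general {H : Type*} [NormedAddCommGroup H] [InnerProductSpace ℝ H]
    (X : Submodule ℝ H)
    (b : H →ₗ[ℝ] H →ₗ[ℝ] ℝ) (hsym : ∀ u w, b u w = b w u)
    (c1 c2 : ℝ) (hc1 : 0 < c1)
    (hcont : ∀ u w, b u w ≤ c2 * ‖u‖ * ‖w‖)
    (hcoer : ∀ u, c1 * ‖u‖ ^ 2 ≤ b u u)
    (F : H →L[ℝ] ℝ)
    (u uX : H) (huX : uX ∈ X)
    (hu : ∀ w, b u w = F w)
    (huXsol : ∀ w ∈ X, b uX w = F w) :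
    ‖u - uX‖ ≤ Real.sqrt (c2 / c1) * ⨅ v : X, ‖u - (v : H)‖ := by
  have horth := galerkin_orthogonality b (F : H →ₗ[ℝ] ℝ) X hu huXsol
  have hquasi : ∀ v : X, ‖u - uX‖ ≤ √(c2 / c1) * ‖u - (v : H)‖ := by
    intro v
    have hdX : uX - (v : H) ∈ X := X.sub_mem huX v.2
    have hsplit : u - (v : H) = (u - uX) + (uX - v) := by abel
    have henergy : b (u - uX) (u - uX) ≤ b (u - v) (u - v) := by
      rw [hsplit]
      exact le_apply_add_add_of_orthogonal b hsym (horth _ hdX)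
        ((hcoer _).trans' (by positivity))
    refine le_sqrt_div_mul_of_mul_sq_le hc1 (norm_nonneg _) ?_
    calc c1 * ‖u - uX‖ ^ 2 ≤ b (u - uX) (u - uX) := hcoer _
      _ ≤ b (u - v) (u - v) := henergy
      _ ≤ c2 * ‖u - (v : H)‖ ^ 2 := (hcont _ _).trans_eq (by ring)
  rw [Real.mul_iInf_of_nonneg (Real.sqrt_nonneg _)]
  exact le_ciInf hquasi

/-- Céa's Lemma: Let `H` be a Hilbert space, `X` a closed subspace, `b` a symmetric
continuous coercive bilinear form with `c₁‖u‖² ≤ b(u,u)` and `b(u,w) ≤ c₂‖u‖‖w‖`.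
If `u ∈ H` solves `b(u,w) = F[w]` for all `w ∈ H` and `uX ∈ X` solves
`b(uX,w) = F[w]` for all `w ∈ X`, then `‖u − uX‖ ≤ √(c₂/c₁) · inf {‖u − v‖ : v ∈ X}`. -/
theorem stmt_12 {H : Type*} [NormedAddCommGroup H] [InnerProductSpace ℝ H]
    [CompleteSpace H]
    (X : Submodule ℝ H) (hX : IsClosed (X : Set H))
    (b : H →ₗ[ℝ] H →ₗ[ℝ] ℝ) (hsym : ∀ u w, b u w = b w u)
    (c1 c2 : ℝ) (hc1 : 0 < c1) (hc12 : c1 ≤ c2)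
    (hcont : ∀ u w, b u w ≤ c2 * ‖u‖ * ‖w‖)
    (hcoer : ∀ u, c1 * ‖u‖ ^ 2 ≤ b u u)
    (F : H →L[ℝ] ℝ)
    (u uX : H) (huX : uX ∈ X)
    (hu : ∀ w, b u w = F w)
    (huXsol : ∀ w ∈ X, b uX w = F w) :
    ‖u - uX‖ ≤ Real.sqrt (c2 / c1) * ⨅ v : X, ‖u - (v : H)‖ :=
  stmt_12_general X b hsym c1 c2 hc1 hcont hcoer F u uX huX hu huXsol
end

section
/- Fundamental theorem of Γ-convergence: let (X,d) be a metric space and F_n: X → [−∞,+∞] a sequence of equicoercive functions Γ-converging to F. Then F attains its minimum on X, min_X F = lim_n inf_X F_n, and if x_n → x with lim_n F_n(x_n) = lim_n inf_X F_n, then x is a minimum point of F. -/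
/-!
Write `m n = inf_X F_n` and `M = inf_X F`. Recovery sequences give `limsup m ≤ M`. Conversely,
take values `c_j ↓ liminf m`; frequently `m n < c_j`, so by equicoercivity there are indices
`n_j → ∞` and points `z_j ∈ K` with `F_{n_j}(z_j) < c_j`. A subsequence of `z_j` converges in `K` to
some `x`, and the Γ-liminf inequality (which passes to subsequences) gives
`F x ≤ liminf m ≤ limsup m ≤ M ≤ F x`. Hence `m → M = F x`, and any `x'` with
`F_n(x_n) → lim m` satisfies `F x' ≤ lim m = M`.
-/

open Filter Topology

theorem StrictMono.exists_tendsto_comp_eq {X : Type*} [TopologicalSpace X] {ψ : ℕ → ℕ}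
    (hψ : StrictMono ψ) {z : ℕ → X} {x : X} (hz : Tendsto z atTop (𝓝 x)) :
    ∃ xs : ℕ → X, Tendsto xs atTop (𝓝 x) ∧ ∀ k, xs (ψ k) = z k := by
  classical
  let xs : ℕ → X := fun n => if h : ∃ k, ψ k = n then z h.choose else x
  have hxs : ∀ k, xs (ψ k) = z k := fun k => by
    have h : ∃ j, ψ j = ψ k := ⟨k, rfl⟩
    simp only [xs, dif_pos h, hψ.injective h.choose_spec]
  refine ⟨xs, tendsto_atTop'.2 fun U hU => ?_, hxs⟩
  obtain ⟨k₀, hk₀⟩ := eventually_atTop.1 (hz.eventually_mem hU)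
  refine ⟨ψ k₀, fun n hn => ?_⟩
  by_cases h : ∃ k, ψ k = n
  · obtain ⟨k, rfl⟩ := h
    exact hxs k ▸ hk₀ k (hψ.le_iff_le.1 hn)
  · simpa only [xs, dif_neg h] using mem_of_mem_nhds hU

section GammaConvergence

variable {X : Type*} [TopologicalSpace X] {F : ℕ → X → EReal} {Flim : X → EReal}

theorem le_liminf_comp_of_gamma_liminf
    (hliminf : ∀ (x : X) (xs : ℕ → X), Tendsto xs atTop (𝓝 x) →
      Flim x ≤ liminf (fun n => F n (xs n)) atTop)
    {ψ : ℕ → ℕ} (hψ : StrictMono ψ) {z : ℕ → X} {x : X} (hz : Tendsto z atTop (𝓝 x)) :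
    Flim x ≤ liminf (fun k => F (ψ k) (z k)) atTop := by
  obtain ⟨xs, hxs, hxsψ⟩ := hψ.exists_tendsto_comp_eq hz
  calc Flim x ≤ liminf (fun n => F n (xs n)) atTop := hliminf x xs hxs
    _ ≤ liminf ((fun n => F n (xs n)) ∘ ψ) atTop := hψ.tendsto_atTop.liminf_le_liminf_comp
    _ = liminf (fun k => F (ψ k) (z k)) atTop := by simp only [Function.comp_def, hxsψ]

theorem limsup_iInf_le_iInf_of_recovery
    (hrecov : ∀ x : X, ∃ xs : ℕ → X, Tendsto xs atTop (𝓝 x) ∧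
      Tendsto (fun n => F n (xs n)) atTop (𝓝 (Flim x))) :
    limsup (fun n => ⨅ x, F n x) atTop ≤ ⨅ x, Flim x := by
  refine le_iInf fun y => ?_
  obtain ⟨xs, -, hFxs⟩ := hrecov y
  calc limsup (fun n => ⨅ x, F n x) atTop ≤ limsup (fun n => F n (xs n)) atTop :=
        limsup_le_limsup (Eventually.of_forall fun n => iInf_le _ _)
    _ = Flim y := hFxs.limsup_eq

theorem exists_le_liminf_iInf_of_isCompact [FirstCountableTopology X] [Nonempty X]
    (hliminf : ∀ (x : X) (xs : ℕ → X), Tendsto xs atTop (𝓝 x) →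
      Flim x ≤ liminf (fun n => F n (xs n)) atTop)
    {K : Set X} (hK : IsCompact K) (hFK : ∀ n, ⨅ x ∈ K, F n x = ⨅ x, F n x) :
    ∃ x, Flim x ≤ liminf (fun n => ⨅ y, F n y) atTop := by
  set L := liminf (fun n => ⨅ y, F n y) atTop
  rcases eq_top_or_lt_top L with hL | hL
  · exact ⟨Classical.arbitrary X, hL ▸ le_top⟩
  obtain ⟨c, -, hcL, hc⟩ := exists_seq_strictAnti_tendsto' hL
  have hfreq : ∀ j, ∃ᶠ n in atTop, ⨅ x ∈ K, F n x < c j := fun j => by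
    simpa only [hFK] using frequently_lt_of_liminf_lt (by isBoundedDefault) (hcL j).1
  obtain ⟨ψ, hψ, hψc⟩ := extraction_forall_of_frequently hfreq
  choose z hzK hzc using fun j => by simpa only [iInf_lt_iff, exists_prop] using hψc j
  obtain ⟨x, -, σ, hσ, hzx⟩ := hK.tendsto_subseq hzK
  refine ⟨x, ?_⟩
  calc Flim x ≤ liminf (fun j => F (ψ (σ j)) (z (σ j))) atTop :=
        le_liminf_comp_of_gamma_liminf hliminf (hψ.comp hσ) hzx
    _ ≤ liminf (fun j => c (σ j)) atTop :=
        liminf_le_liminf (Eventually.of_forall fun j => (hzc (σ j)).le)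
    _ = L := (hc.comp hσ.tendsto_atTop).liminf_eq

end GammaConvergence

/-- Fundamental theorem of Γ-convergence: let `(X,d)` be a metric space and
`Fseq : ℕ → X → [−∞,+∞]` a sequence of equicoercive functions Γ-converging to `Flim`.
Then `Flim` attains its minimum on `X`, `min_X Flim = lim_n inf_X Fseq n`, and if
`xs n → x` with `lim_n Fseq n (xs n) = lim_n inf_X Fseq n`, then `x` is a minimum
point of `Flim`. -/
theorem stmt_19 {X : Type*} [MetricSpace X] [Nonempty X]
    (Fseq : ℕ → X → EReal) (Flim : X → EReal)
    -- Γ-liminf inequality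
    (hliminf : ∀ (x : X) (xs : ℕ → X), Tendsto xs atTop (nhds x) →
      Flim x ≤ liminf (fun n => Fseq n (xs n)) atTop)
    -- existence of recovery sequences
    (hrecov : ∀ x : X, ∃ xs : ℕ → X, Tendsto xs atTop (nhds x) ∧
      Tendsto (fun n => Fseq n (xs n)) atTop (nhds (Flim x)))
    -- equicoercivity
    (hequi : ∃ K : Set X, IsCompact K ∧ ∀ n, (⨅ x ∈ K, Fseq n x) = ⨅ x : X, Fseq n x) :
    (∃ xmin : X, ∀ y : X, Flim xmin ≤ Flim y) ∧
    Tendsto (fun n => ⨅ x : X, Fseq n x) atTop (nhds (⨅ x : X, Flim x)) ∧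
    (∀ (x : X) (xs : ℕ → X) (Lval : EReal),
      Tendsto xs atTop (nhds x) →
      Tendsto (fun n => Fseq n (xs n)) atTop (nhds Lval) →
      Tendsto (fun n => ⨅ y : X, Fseq n y) atTop (nhds Lval) →
      ∀ y : X, Flim x ≤ Flim y) := by
  obtain ⟨K, hK, hFK⟩ := hequi
  obtain ⟨x, hx⟩ := exists_le_liminf_iInf_of_isCompact hliminf hK hFK
  have hlimsup := limsup_iInf_le_iInf_of_recovery hrecov
  have hx_min : ∀ y, Flim x ≤ Flim y := fun y =>
    calc Flim x ≤ _ := hx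
      _ ≤ _ := liminf_le_limsup
      _ ≤ _ := hlimsup
      _ ≤ Flim y := iInf_le _ y
  have hinf : Tendsto (fun n => ⨅ x, Fseq n x) atTop (𝓝 (⨅ x, Flim x)) :=
    tendsto_of_le_liminf_of_limsup_le ((iInf_le _ x).trans hx) hlimsup
  refine ⟨⟨x, hx_min⟩, hinf, fun x' xs' Lval hxs' hFxs' hLval y => ?_⟩
  calc Flim x' ≤ liminf (fun n => Fseq n (xs' n)) atTop := hliminf x' xs' hxs'
    _ = Lval := hFxs'.liminf_eq
    _ = ⨅ x, Flim x := tendsto_nhds_unique hLval hinf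
    _ ≤ Flim y := iInf_le _ y
end
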